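/- Let p be an odd prime with p ∤ (s^2 - 4), and let X be a root of x^2 - sx + 1 in F_p (if s^2-4 is a square mod p) or in F_{p^2} otherwise. Then the rank r(p) of the sequence f_n(s,-1) modulo p equals ord(X)/2 if ord(X) is even, and equals ord(X) if ord(X) is odd. -/

import Mathlib

/-- Generalized Fibonacci sequence: f 0 = 0, f 1 = 1, f (n+2) = s * f (n+1) + t * f n. -/
def genFib (s t : ℤ) : ℕ → ℤ
  | 0 => 0
  | 1 => 1
  | n + 2 => s * genFib s t (n + 1) + t * genFib s t n

/-!
The other root of `x² - s x + 1` is `Y = s - X = X⁻¹`, and the Binet formula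
`f_n · (X - Y) = X^n - Y^n` holds. Since `(X - Y)² = s² - 4` is nonzero mod `p`, we get
`p ∣ f_n ↔ X^n = X^{-n} ↔ (X²)^n = 1`, so the rank is `ord(X²) = ord(X) / gcd(ord(X), 2)`.
-/

theorem genFib_mul_sub {R : Type*} [CommRing R] {s t : ℤ} {X Y : R}
    (hs : X + Y = s) (ht : X * Y = -t) (n : ℕ) :
    (genFib s t n : R) * (X - Y) = X ^ n - Y ^ n := by
  induction n using Nat.twoStepInduction with
  | zero => simp [genFib]
  | one => simp [genFib]
  | more n ih ih' =>
    rw [genFib]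
    push_cast
    linear_combination (s : R) * ih' + (t : R) * ih - (X ^ (n + 1) - Y ^ (n + 1)) * hs +
      (X ^ n - Y ^ n) * ht

theorem genFib_neg_one_eq_zero_iff {F : Type*} [Field F] {s : ℤ} {X : F}
    (hX : X ^ 2 - s * X + 1 = 0) (hD : ((s ^ 2 - 4 : ℤ) : F) ≠ 0) (n : ℕ) :
    (genFib s (-1) n : F) = 0 ↔ (X ^ 2) ^ n = 1 := by
  set Y : F := s - X
  have hXY : X * Y = 1 := by linear_combination -hX
  have hX0 : X ≠ 0 := left_ne_zero_of_mul_eq_one hXY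
  have hsub : X - Y ≠ 0 := by
    have : (X - Y) ^ 2 = ((s ^ 2 - 4 : ℤ) : F) := by push_cast; linear_combination 4 * hX
    exact fun h => hD (by rw [← this, h, sq, zero_mul])
  rw [← (mul_left_injective₀ hsub).eq_iff, zero_mul,
    genFib_mul_sub (by ring) (by simp [hXY]), sub_eq_zero,
    ← mul_right_inj' (pow_ne_zero n hX0), ← mul_pow X Y, hXY, one_pow, ← mul_pow, ← sq]

theorem rank_eq_orderOf_general (s : ℤ) (p : ℕ) [Fact p.Prime]
    (hD : ¬ (p : ℤ) ∣ (s ^ 2 - 4))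
    (X : GaloisField p 2) (hX : X ^ 2 - (s : GaloisField p 2) * X + 1 = 0)
    (r : ℕ) (hr : 0 < r) (hrdvd : (p : ℤ) ∣ genFib s (-1) r)
    (hleast : ∀ l : ℕ, 0 < l → (p : ℤ) ∣ genFib s (-1) l → r ≤ l) :
    (Even (orderOf X) → r = orderOf X / 2) ∧ (Odd (orderOf X) → r = orderOf X) := by
  have hdvd (n : ℕ) : (p : ℤ) ∣ genFib s (-1) n ↔ orderOf (X ^ 2) ∣ n := by
    rw [← CharP.intCast_eq_zero_iff (GaloisField p 2) p,
      genFib_neg_one_eq_zero_iff hX (by rwa [Ne, CharP.intCast_eq_zero_iff _ p]),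
      orderOf_dvd_iff_pow_eq_one]
  have hpos : 0 < orderOf (X ^ 2) := by
    have hX0 : X ^ 2 ≠ 0 := pow_ne_zero 2 (by rintro rfl; simp at hX)
    rw [← Units.val_mk0 hX0, orderOf_units]
    exact orderOf_pos _
  have hr_eq : r = orderOf (X ^ 2) :=
    le_antisymm (hleast _ hpos ((hdvd _).2 dvd_rfl)) (Nat.le_of_dvd hr ((hdvd r).1 hrdvd))
  rw [hr_eq, orderOf_pow' X two_ne_zero]
  exact ⟨fun h => by rw [Nat.gcd_eq_right (even_iff_two_dvd.mp h)],
    fun h => by rw [Nat.Coprime.gcd_eq_one h.coprime_two_right, Nat.div_one]⟩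

/-- The rank r(p) of f_n(s,-1) mod an odd prime p ∤ s²-4 equals ord(X)/2 or ord(X),
where X is a root of x² - sx + 1 in 𝔽_{p²} (which contains 𝔽_p). -/
theorem rank_eq_orderOf (s : ℤ) (p : ℕ) [Fact p.Prime] (hodd : Odd p)
    (hD : ¬ (p : ℤ) ∣ (s ^ 2 - 4))
    (X : GaloisField p 2) (hX : X ^ 2 - (s : GaloisField p 2) * X + 1 = 0)
    (r : ℕ) (hr : 0 < r) (hrdvd : (p : ℤ) ∣ genFib s (-1) r)
    (hleast : ∀ l : ℕ, 0 < l → (p : ℤ) ∣ genFib s (-1) l → r ≤ l) :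
    (Even (orderOf X) → r = orderOf X / 2) ∧ (Odd (orderOf X) → r = orderOf X) :=
  rank_eq_orderOf_general s p hD X hX r hr hrdvd hleast
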